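/- arXiv:2208.07300 — 3 statements merged into one kernel-verified Lean document; each statement's English description precedes it below -/
import Mathlib

section
/- Let 𝓑 be a basis of a Banach space X and 𝐧 a strictly increasing sequence of positive integers. The following are equivalent: (i) 𝓑 is (𝐧, strong partially greedy); (ii) 𝓑 is quasi-greedy and (𝐧, PSLC); (iii) 𝓑 is quasi-greedy and (𝐧, superconservative); (iv) 𝓑 is quasi-greedy and (𝐧, conservative). -/
open scoped BigOperators ENNReal NNReal

/-- The collection `𝕋(𝐧)`: pairs of finite sets `(A, D)` with `A ⊆ 𝐧`, `|A| ≤ |D|`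
and `A < D ∩ 𝐧`. -/
def TPair (seq : ℕ → ℕ) (A D : Finset ℕ) : Prop :=
  (↑A : Set ℕ) ⊆ Set.range seq ∧ A.card ≤ D.card ∧
    ∀ a ∈ A, ∀ d ∈ D, d ∈ Set.range seq → a < d

/-- The collection `𝕊(𝐧)`: pairs of finite sets `(A, D)` with `A ⊆ 𝐧` and `|A| ≤ |D|`. -/
def SPair (seq : ℕ → ℕ) (A D : Finset ℕ) : Prop :=
  (↑A : Set ℕ) ⊆ Set.range seq ∧ A.card ≤ D.card

/-- The interval `{n_{k+1}, …, n_{k+m}}` of `m` consecutive terms of the sequence `seq`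
(0-indexed: `seq k, …, seq (k+m-1)`). -/
def intervalSet (seq : ℕ → ℕ) (k m : ℕ) : Finset ℕ :=
  (Finset.range m).image fun i => seq (k + i)

/-- The (1-based) index `ι(max A)` of the largest element of `A` in the sequence `seq`
(`0` if `A` is empty). -/
noncomputable def iotaMax (seq : ℕ → ℕ) (A : Finset ℕ) : ℕ :=
  if h : A.Nonempty then sInf {i | seq i = A.max' h} + 1 else 0

/-- The collection `𝕋^ω(𝐧)`: pairs of finite sets `(A, D)` with `A ⊆ 𝐧`, `ω(A) ≤ ω(D)`
and `A < D ∩ 𝐧`. -/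
def WTPair (w : Set ℕ → ℝ≥0∞) (seq : ℕ → ℕ) (A D : Finset ℕ) : Prop :=
  (↑A : Set ℕ) ⊆ Set.range seq ∧ w (↑A : Set ℕ) ≤ w (↑D : Set ℕ) ∧
    ∀ a ∈ A, ∀ d ∈ D, d ∈ Set.range seq → a < d

/-- A (semi-normalized) basis `(e_n)` of a Banach space `X`, together with its biorthogonal
functionals `(e_n^*)`: the span of the `e_n` is norm-dense, `e_j^*(e_k) = δ_{jk}`, and the
norms of the `e_n` and `e_n^*` are bounded above and away from zero. -/
structure BasisOf (𝕜 : Type*) (X : Type*) [RCLike 𝕜] [NormedAddCommGroup X]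
    [NormedSpace 𝕜 X] where
  e : ℕ → X
  coord : ℕ → X →L[𝕜] 𝕜
  dense_span : Dense (↑(Submodule.span 𝕜 (Set.range e)) : Set X)
  biorth : ∀ j k : ℕ, coord j (e k) = if j = k then (1 : 𝕜) else 0
  norm_bounds : ∃ c₁ c₂ : ℝ, 0 < c₁ ∧ (∀ n, c₁ ≤ ‖e n‖ ∧ c₁ ≤ ‖coord n‖) ∧
    ∀ n, ‖e n‖ ≤ c₂ ∧ ‖coord n‖ ≤ c₂

namespace BasisOf

variable {𝕜 : Type*} {X : Type*} [RCLike 𝕜] [NormedAddCommGroup X] [NormedSpace 𝕜 X]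
variable (B : BasisOf 𝕜 X)

/-- The projection `P_A(x) = ∑_{n ∈ A} e_n^*(x) e_n`. -/
noncomputable def proj (A : Finset ℕ) (x : X) : X := ∑ n ∈ A, B.coord n x • B.e n

/-- `1_{εA} = ∑_{n ∈ A} ε_n e_n`. -/
noncomputable def sgnSum (ε : ℕ → 𝕜) (A : Finset ℕ) : X := ∑ n ∈ A, ε n • B.e n

/-- `1_A = ∑_{n ∈ A} e_n`. -/
noncomputable def ones (A : Finset ℕ) : X := ∑ n ∈ A, B.e n

/-- `P^𝐧_m(x) = ∑_{i=1}^m e_{n_i}^*(x) e_{n_i}`, the projection on the first `m` terms of the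
subsequence given by `seq`. -/
noncomputable def projSeq (seq : ℕ → ℕ) (m : ℕ) (x : X) : X :=
  ∑ i ∈ Finset.range m, B.coord (seq i) x • B.e (seq i)

/-- `A` is a greedy set of `x`: the coefficients inside `A` dominate those outside. -/
def IsGreedySet (x : X) (A : Finset ℕ) : Prop :=
  ∀ a ∈ A, ∀ b ∉ A, ‖B.coord b x‖ ≤ ‖B.coord a x‖

/-- The support `{n : e_n^*(x) ≠ 0}`. -/
def supp (x : X) : Set ℕ := {n | B.coord n x ≠ 0}

/-- `𝓑` is `C`-(`𝐧`, strong partially greedy):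
`‖x - G_m(x)‖ ≤ C ⋅ σ̂^𝐧_m(x)` for all `x`, all `m ≥ 1` and all greedy sums. -/
def SPGWith (seq : ℕ → ℕ) (C : ℝ) : Prop :=
  ∀ x : X, ∀ m : ℕ, 1 ≤ m → ∀ A : Finset ℕ, A.card = m → B.IsGreedySet x A →
    ∀ k : ℕ, k ≤ m → ‖x - B.proj A x‖ ≤ C * ‖x - B.projSeq seq k x‖

/-- `𝓑` is (`𝐧`, strong partially greedy). -/
def SPG (seq : ℕ → ℕ) : Prop := ∃ C : ℝ, 1 ≤ C ∧ B.SPGWith seq C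

/-- `𝓑` is quasi-greedy with constant `C`. -/
def QuasiGreedyWith (C : ℝ) : Prop :=
  ∀ x : X, ∀ A : Finset ℕ, A.Nonempty → B.IsGreedySet x A → ‖B.proj A x‖ ≤ C * ‖x‖

/-- `𝓑` is quasi-greedy. -/
def QuasiGreedy : Prop := ∃ C : ℝ, B.QuasiGreedyWith C

/-- `𝓑` is suppression quasi-greedy with constant `C`. -/
def SuppQGWith (C : ℝ) : Prop :=
  ∀ x : X, ∀ A : Finset ℕ, A.Nonempty → B.IsGreedySet x A → ‖x - B.proj A x‖ ≤ C * ‖x‖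

/-- `𝓑` is `C`-(`𝐧`, PSLC). -/
def PSLCWith (seq : ℕ → ℕ) (C : ℝ) : Prop :=
  ∀ x : X, (∀ n, ‖B.coord n x‖ ≤ 1) → ∀ A D : Finset ℕ, TPair seq A D →
    (∀ d ∈ D, B.coord d x = 0) →
    (∀ a ∈ A, ∀ j : ℕ, (j ∈ D ∨ B.coord j x ≠ 0) → j ∈ Set.range seq → a < j) →
    ∀ ε δ : ℕ → 𝕜, (∀ n, ‖ε n‖ = 1) → (∀ n, ‖δ n‖ = 1) →
      ‖x + B.sgnSum ε A‖ ≤ C * ‖x + B.sgnSum δ D‖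

/-- `𝓑` is (`𝐧`, PSLC). -/
def PSLC (seq : ℕ → ℕ) : Prop := ∃ C : ℝ, 1 ≤ C ∧ B.PSLCWith seq C

/-- `𝓑` is (`𝐧`, superconservative) with constant `C`. -/
def SuperconservativeWith (seq : ℕ → ℕ) (C : ℝ) : Prop :=
  ∀ A D : Finset ℕ, TPair seq A D →
    ∀ ε δ : ℕ → 𝕜, (∀ n, ‖ε n‖ = 1) → (∀ n, ‖δ n‖ = 1) →
      ‖B.sgnSum ε A‖ ≤ C * ‖B.sgnSum δ D‖

/-- `𝓑` is (`𝐧`, superconservative). -/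
def Superconservative (seq : ℕ → ℕ) : Prop :=
  ∃ C : ℝ, 0 < C ∧ B.SuperconservativeWith seq C

/-- `𝓑` is (`𝐧`, conservative) with constant `C`. -/
def ConservativeWith (seq : ℕ → ℕ) (C : ℝ) : Prop :=
  ∀ A D : Finset ℕ, TPair seq A D → ‖B.ones A‖ ≤ C * ‖B.ones D‖

/-- `𝓑` is (`𝐧`, conservative). -/
def Conservative (seq : ℕ → ℕ) : Prop := ∃ C : ℝ, 0 < C ∧ B.ConservativeWith seq C

/-- `𝓑` is (`𝐧`, democratic) with constant `C`. -/
def DemocraticWith (seq : ℕ → ℕ) (C : ℝ) : Prop :=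
  ∀ A D : Finset ℕ, SPair seq A D → ‖B.ones A‖ ≤ C * ‖B.ones D‖

/-- `𝓑` is (`𝐧`, democratic). -/
def Democratic (seq : ℕ → ℕ) : Prop := ∃ C : ℝ, B.DemocraticWith seq C

/-- `𝓑` is (`𝐧`, almost greedy) with constant `C`:
`‖x - G_m(x)‖ ≤ C σ̃^𝐧_m(x)` where `σ̃^𝐧_m(x) = inf {‖x - P_D(x)‖ : D ⊆ 𝐧, |D| = m}`. -/
def AlmostGreedyWith (seq : ℕ → ℕ) (C : ℝ) : Prop :=
  ∀ x : X, ∀ m : ℕ, 1 ≤ m → ∀ A : Finset ℕ, A.card = m → B.IsGreedySet x A →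
    ∀ D : Finset ℕ, (↑D : Set ℕ) ⊆ Set.range seq → D.card = m →
      ‖x - B.proj A x‖ ≤ C * ‖x - B.proj D x‖

/-- `𝓑` is (`𝐧`, almost greedy). -/
def AlmostGreedy (seq : ℕ → ℕ) : Prop := ∃ C : ℝ, 1 ≤ C ∧ B.AlmostGreedyWith seq C

/-- `𝓑` is 1-unconditional. -/
def OneUnconditional : Prop :=
  ∀ (F : Finset ℕ) (a b : ℕ → 𝕜), (∀ n, ‖a n‖ ≤ ‖b n‖) →
    ‖∑ n ∈ F, a n • B.e n‖ ≤ ‖∑ n ∈ F, b n • B.e n‖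

/-- `𝓑` is `C`-(`𝐧`, consecutive almost greedy) of type I. -/
def CAGIWith (seq : ℕ → ℕ) (C : ℝ) : Prop :=
  ∀ x : X, ∀ m : ℕ, 1 ≤ m → ∀ A : Finset ℕ, A.card = m → B.IsGreedySet x A →
    ∀ k : ℕ, ‖x - B.proj A x‖ ≤ C * ‖x - B.proj (intervalSet seq k m) x‖

/-- `𝓑` is `C`-(`𝐧`, consecutive almost greedy) of type II. -/
def CAGIIWith (seq : ℕ → ℕ) (C : ℝ) : Prop :=
  ∀ x : X, ∀ m : ℕ, 1 ≤ m → ∀ A : Finset ℕ, A.card = m → B.IsGreedySet x A →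
    ∀ k p : ℕ, ((↑(intervalSet seq k p) : Set ℕ) ∩ B.supp x).ncard ≤ m →
      ‖x - B.proj A x‖ ≤ C * ‖x - B.proj (intervalSet seq k p) x‖

/-- `𝓑` is `C`-(`𝐧`, RSLC). -/
def RSLCWith (seq : ℕ → ℕ) (C : ℝ) : Prop :=
  ∀ x : X, (∀ n, ‖B.coord n x‖ ≤ 1) → ∀ A D : Finset ℕ, SPair seq A D →
    (∀ d ∈ D, B.coord d x = 0) →
    (∀ j : ℕ, (j ∈ D ∨ B.coord j x ≠ 0) → j ∈ Set.range seq →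
      (∀ a ∈ A, j < a) ∨ (∀ a ∈ A, a < j)) →
    ∀ ε δ : ℕ → 𝕜, (∀ n, ‖ε n‖ = 1) → (∀ n, ‖δ n‖ = 1) →
      ‖x + B.sgnSum ε A‖ ≤ C * ‖x + B.sgnSum δ D‖

/-- `𝓑` is `C`-(`𝐧`, SLC). -/
def SLCWith (seq : ℕ → ℕ) (C : ℝ) : Prop :=
  ∀ x : X, (∀ n, ‖B.coord n x‖ ≤ 1) → ∀ A D : Finset ℕ, SPair seq A D →
    Disjoint A D → (∀ a ∈ A, B.coord a x = 0) → (∀ d ∈ D, B.coord d x = 0) →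
    ∀ ε δ : ℕ → 𝕜, (∀ n, ‖ε n‖ = 1) → (∀ n, ‖δ n‖ = 1) →
      ‖x + B.sgnSum ε A‖ ≤ C * ‖x + B.sgnSum δ D‖

/-- The Lebesgue-type parameter `L̂^𝐧_m`: the least constant `C ∈ [0,∞]` with
`‖x - G_m(x)‖ ≤ C σ̂^𝐧_m(x)` for all `x` and all greedy sums `G_m(x)`. -/
noncomputable def Lhat (seq : ℕ → ℕ) (m : ℕ) : ℝ≥0∞ :=
  sInf {C : ℝ≥0∞ | ∀ (x : X) (A : Finset ℕ), A.card = m → B.IsGreedySet x A →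
    ∀ k : ℕ, k ≤ m →
      (‖x - B.proj A x‖₊ : ℝ≥0∞) ≤ C * (‖x - B.projSeq seq k x‖₊ : ℝ≥0∞)}

/-- The parameter `g_m^c`. -/
noncomputable def gc (m : ℕ) : ℝ≥0∞ :=
  ⨆ (x : X) (_ : x ≠ 0) (A : Finset ℕ) (_ : A.card ≤ m) (_ : B.IsGreedySet x A),
    (‖x - B.proj A x‖₊ : ℝ≥0∞) / (‖x‖₊ : ℝ≥0∞)

/-- The parameter `g̃_m`. -/
noncomputable def gtilde (m : ℕ) : ℝ≥0∞ :=
  ⨆ (x : X) (_ : x ≠ 0) (A : Finset ℕ) (A' : Finset ℕ) (_ : A ⊆ A') (_ : A.card < A'.card)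
    (_ : A'.card ≤ m) (_ : B.IsGreedySet x A) (_ : B.IsGreedySet x A'),
    (‖B.proj A' x - B.proj A x‖₊ : ℝ≥0∞) / (‖x‖₊ : ℝ≥0∞)

/-- The parameter `sc^𝐧_m`. -/
noncomputable def scParam (seq : ℕ → ℕ) (m : ℕ) : ℝ≥0∞ :=
  ⨆ (A : Finset ℕ) (D : Finset ℕ) (_ : TPair seq A D) (_ : D.card ≤ m)
    (_ : ∀ a ∈ A, a ≤ seq (m - 1)) (ε : ℕ → 𝕜) (_ : ∀ n, ‖ε n‖ = 1)
    (δ : ℕ → 𝕜) (_ : ∀ n, ‖δ n‖ = 1),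
    (‖B.sgnSum ε A‖₊ : ℝ≥0∞) / (‖B.sgnSum δ D‖₊ : ℝ≥0∞)

/-- The parameter `ω^𝐧_m`. -/
noncomputable def omegaParam (seq : ℕ → ℕ) (m : ℕ) : ℝ≥0∞ :=
  ⨆ (x : X) (_ : ∀ n, ‖B.coord n x‖ ≤ 1) (A : Finset ℕ) (D : Finset ℕ)
    (_ : (↑A : Set ℕ) ⊆ Set.range seq) (_ : A.card ≤ D.card) (_ : D.card ≤ m)
    (_ : ∀ a ∈ A, a ≤ seq (m - 1)) (_ : ∀ d ∈ D, B.coord d x = 0)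
    (_ : ∀ a ∈ A, ∀ j : ℕ, (j ∈ D ∨ B.coord j x ≠ 0) → j ∈ Set.range seq → a < j)
    (ε : ℕ → 𝕜) (_ : ∀ n, ‖ε n‖ = 1) (δ : ℕ → 𝕜) (_ : ∀ n, ‖δ n‖ = 1),
    (‖x + B.sgnSum ε A‖₊ : ℝ≥0∞) / (‖x + B.sgnSum δ D‖₊ : ℝ≥0∞)

/-- The parameter `ω̂^𝐧_m`. -/
noncomputable def omegaHatParam (seq : ℕ → ℕ) (m : ℕ) : ℝ≥0∞ :=
  ⨆ (x : X) (_ : ∀ n, ‖B.coord n x‖ ≤ 1) (A : Finset ℕ) (D : Finset ℕ)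
    (_ : (↑A : Set ℕ) ⊆ Set.range seq) (_ : A.card ≤ D.card) (_ : D.card ≤ m)
    (_ : ∀ a ∈ A, a ≤ seq (m - 1))
    (_ : ∀ d ∈ D, B.coord d (x - B.proj A x) = 0)
    (_ : ∀ a ∈ A, ∀ j : ℕ, (j ∈ D ∨ B.coord j (x - B.proj A x) ≠ 0) →
      j ∈ Set.range seq → a < j)
    (ε : ℕ → 𝕜) (_ : ∀ n, ‖ε n‖ = 1),
    (‖x‖₊ : ℝ≥0∞) / (‖x - B.proj A x + B.sgnSum ε D‖₊ : ℝ≥0∞)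

/-- `κ = sup_{j,k} ‖e_j‖ ‖e_k^*‖`. -/
noncomputable def kappa : ℝ≥0∞ :=
  ⨆ (j : ℕ) (k : ℕ), ((‖B.e j‖₊ * ‖B.coord k‖₊ : ℝ≥0) : ℝ≥0∞)

/-- `𝓑` is `𝐬`-(`𝐧`, strong partially greedy) with constant `C`:
the strong partially greedy inequality for all orders `m` in the sequence `s`. -/
def SPGOnWith (seq : ℕ → ℕ) (s : ℕ → ℕ) (C : ℝ) : Prop :=
  ∀ x : X, ∀ i : ℕ, ∀ A : Finset ℕ, A.card = s i → B.IsGreedySet x A →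
    ∀ k : ℕ, k ≤ s i → ‖x - B.proj A x‖ ≤ C * ‖x - B.projSeq seq k x‖

/-- `𝓑` is (`λ`, `𝐧`, strong partially greedy). -/
def LamSPG (seq : ℕ → ℕ) (lam : ℝ) : Prop :=
  ∃ C : ℝ, 1 ≤ C ∧ ∀ x : X, ∀ m : ℕ, 1 ≤ m →
    ∀ A : Finset ℕ, A.card = ⌈lam * (m : ℝ)⌉₊ → B.IsGreedySet x A →
      ∀ k : ℕ, k ≤ m → ‖x - B.proj A x‖ ≤ C * ‖x - B.projSeq seq k x‖

/-- `𝓑` is (`λ`, `𝐧`, PSLC). -/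
def LamPSLC (seq : ℕ → ℕ) (lam : ℝ) : Prop :=
  ∃ C : ℝ, 1 ≤ C ∧ ∀ x : X, (∀ n, ‖B.coord n x‖ ≤ 1) →
    ∀ A D : Finset ℕ, (↑A : Set ℕ) ⊆ Set.range seq → A.card ≤ D.card →
      (lam - 1) * (iotaMax seq A : ℝ) + A.card ≤ D.card →
      (∀ d ∈ D, B.coord d x = 0) →
      (∀ a ∈ A, ∀ j : ℕ, (j ∈ D ∨ B.coord j x ≠ 0) → j ∈ Set.range seq → a < j) →
      ∀ ε δ : ℕ → 𝕜, (∀ n, ‖ε n‖ = 1) → (∀ n, ‖δ n‖ = 1) →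
        ‖x + B.sgnSum ε A‖ ≤ C * ‖x + B.sgnSum δ D‖

/-- `𝓑` is (`λ`, `𝐧`, superconservative). -/
def LamSuperconservative (seq : ℕ → ℕ) (lam : ℝ) : Prop :=
  ∃ C : ℝ, 0 < C ∧ ∀ A D : Finset ℕ, TPair seq A D →
    (lam - 1) * (iotaMax seq A : ℝ) + A.card ≤ D.card →
    ∀ ε δ : ℕ → 𝕜, (∀ n, ‖ε n‖ = 1) → (∀ n, ‖δ n‖ = 1) →
      ‖B.sgnSum ε A‖ ≤ C * ‖B.sgnSum δ D‖

/-- `𝓑` is (`λ`, `𝐧`, conservative). -/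
def LamConservative (seq : ℕ → ℕ) (lam : ℝ) : Prop :=
  ∃ C : ℝ, 0 < C ∧ ∀ A D : Finset ℕ, TPair seq A D →
    (lam - 1) * (iotaMax seq A : ℝ) + A.card ≤ D.card →
    ‖B.ones A‖ ≤ C * ‖B.ones D‖

/-- `𝓑` is `ω`-(`𝐧`, strong partially greedy) for the weight on sets `w`. -/
def WSPG (seq : ℕ → ℕ) (w : Set ℕ → ℝ≥0∞) : Prop :=
  ∃ C : ℝ, 1 ≤ C ∧ ∀ x : X, ∀ m : ℕ, 1 ≤ m → ∀ A : Finset ℕ, A.card = m →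
    B.IsGreedySet x A → ∀ m' : ℕ,
      w (↑((Finset.range m').image seq \ A) : Set ℕ) ≤
        w (↑(A \ (Finset.range m').image seq) : Set ℕ) →
      ‖x - B.proj A x‖ ≤ C * ‖x - B.proj ((Finset.range m').image seq) x‖

/-- `𝓑` is `ω`-(`𝐧`, PSLC). -/
def WPSLC (seq : ℕ → ℕ) (w : Set ℕ → ℝ≥0∞) : Prop :=
  ∃ C : ℝ, 1 ≤ C ∧ ∀ x : X, (∀ n, ‖B.coord n x‖ ≤ 1) →
    ∀ A D : Finset ℕ, WTPair w seq A D →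
      (∀ d ∈ D, B.coord d x = 0) →
      (∀ a ∈ A, ∀ j : ℕ, (j ∈ D ∨ B.coord j x ≠ 0) → j ∈ Set.range seq → a < j) →
      ∀ ε δ : ℕ → 𝕜, (∀ n, ‖ε n‖ = 1) → (∀ n, ‖δ n‖ = 1) →
        ‖x + B.sgnSum ε A‖ ≤ C * ‖x + B.sgnSum δ D‖

/-- `𝓑` is `ω`-(`𝐧`, superconservative). -/
def WSuperconservative (seq : ℕ → ℕ) (w : Set ℕ → ℝ≥0∞) : Prop :=
  ∃ C : ℝ, 0 < C ∧ ∀ A D : Finset ℕ, WTPair w seq A D →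
    ∀ ε δ : ℕ → 𝕜, (∀ n, ‖ε n‖ = 1) → (∀ n, ‖δ n‖ = 1) →
      ‖B.sgnSum ε A‖ ≤ C * ‖B.sgnSum δ D‖

/-- `𝓑` is `ω`-(`𝐧`, conservative). -/
def WConservative (seq : ℕ → ℕ) (w : Set ℕ → ℝ≥0∞) : Prop :=
  ∃ C : ℝ, 0 < C ∧ ∀ A D : Finset ℕ, WTPair w seq A D → ‖B.ones A‖ ≤ C * ‖B.ones D‖

end BasisOf

/-- A Banach space over `𝕜` equipped with a basis. -/
structure BanachWithBasis (𝕜 : Type*) [RCLike 𝕜] where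
  carrier : Type
  [grp : NormedAddCommGroup carrier]
  [mod : NormedSpace 𝕜 carrier]
  [comp : CompleteSpace carrier]
  basis : BasisOf 𝕜 carrier

attribute [instance] BanachWithBasis.grp BanachWithBasis.mod BanachWithBasis.comp

/-!
The implications (i) ⇒ (ii) ⇒ (iii) ⇒ (iv) are specialisations: quasi-greediness is the case
`k = 0` of the strong partially greedy inequality, the PSLC inequality is that inequality for a
suitable perturbation of `x`, and (iii), (iv) are the cases `x = 0` and `ε = δ = 1` of PSLC.

Conversely, `x - G_m(x)` differs from `x - P^𝐧_k(x)` by a greedy sum of `x - P^𝐧_k(x)` and by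
coefficients on the first `k` terms of `𝐧` that lie below the smallest greedy coefficient `t`.
By convexity the latter part is bounded by `t ‖1_F‖` for a set `F` beyond those terms and at
least as large as their number, which is conservativity, and quasi-greediness bounds `t ‖1_F‖`
by `‖x - P^𝐧_k(x)‖` through an Abel summation over the superlevel sets of the coefficients.
-/

open Finset

section LayerCake

variable {𝕜 X ι : Type*} [RCLike 𝕜] [NormedAddCommGroup X] [NormedSpace 𝕜 X]

/-- Peeling off the smallest coefficient (Abel summation) writes `∑ aₙ wₙ` as a nonnegative
combination, of total weight `max a ≤ L`, of sums over superlevel sets of `a`. -/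
theorem norm_sum_smul_le_of_superlevel_sums (w : ι → X) (a : ι → ℝ) {L M : ℝ} (hL : 0 ≤ L)
    (F : Finset ι) (ha : ∀ n ∈ F, 0 ≤ a n ∧ a n ≤ L)
    (hM : ∀ s > 0, ‖∑ n ∈ F with s ≤ a n, w n‖ ≤ M) :
    ‖∑ n ∈ F, (a n : 𝕜) • w n‖ ≤ L * M := by
  classical
  induction F using Finset.strongInduction generalizing a L with
  | H F ih =>
  rcases F.eq_empty_or_nonempty with rfl | hF
  · simpa using mul_nonneg hL ((norm_nonneg _).trans (hM 1 one_pos))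
  obtain ⟨b, hb, hmin⟩ := F.exists_min_image a hF
  obtain ⟨hb0, hbL⟩ := ha b hb
  have hsplit : ∑ n ∈ F, (a n : 𝕜) • w n =
      (a b : 𝕜) • ∑ n ∈ F, w n + ∑ n ∈ F.erase b, ((a n - a b : ℝ) : 𝕜) • w n := by
    rw [sum_erase _ (by simp), smul_sum, ← sum_add_distrib]
    refine sum_congr rfl fun n _ => ?_
    rw [RCLike.ofReal_sub, sub_smul, add_sub_cancel]
  have hlow : ‖(a b : 𝕜) • ∑ n ∈ F, w n‖ ≤ a b * M := by
    rw [norm_smul, RCLike.norm_ofReal, abs_of_nonneg hb0]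
    rcases hb0.eq_or_lt with h0 | hpos
    · simp [← h0]
    · gcongr
      simpa [filter_true_of_mem hmin] using hM (a b) hpos
  have hhigh : ‖∑ n ∈ F.erase b, ((a n - a b : ℝ) : 𝕜) • w n‖ ≤ (L - a b) * M := by
    refine ih _ (erase_ssubset hb) (fun n => a n - a b) (by linarith) ?_ ?_
    · intro n hn
      have := (ha n (mem_of_mem_erase hn)).2
      have := hmin n (mem_of_mem_erase hn)
      constructor <;> linarith
    · intro s hs
      convert hM (s + a b) (by linarith) using 3
      ext n
      simp only [mem_filter, mem_erase]
      constructor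
      · rintro ⟨⟨-, hn⟩, h⟩
        exact ⟨hn, by linarith⟩
      · rintro ⟨hn, h⟩
        exact ⟨⟨by rintro rfl; linarith, hn⟩, by linarith⟩
  rw [hsplit]
  calc _ ≤ a b * M + (L - a b) * M := (norm_add_le _ _).trans (add_le_add hlow hhigh)
    _ = L * M := by ring

theorem norm_sum_ofReal_smul_le_of_subset_sums (w : ι → X) (r : ι → ℝ) {L M : ℝ} (hL : 0 ≤ L)
    (F : Finset ι) (hr : ∀ n ∈ F, |r n| ≤ L) (hM : ∀ S ⊆ F, ‖∑ n ∈ S, w n‖ ≤ M) :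
    ‖∑ n ∈ F, (r n : 𝕜) • w n‖ ≤ 2 * L * M := by
  have hpart : ∀ p : ι → ℝ, (∀ n ∈ F, 0 ≤ p n ∧ p n ≤ L) → ‖∑ n ∈ F, (p n : 𝕜) • w n‖ ≤ L * M :=
    fun p hp => norm_sum_smul_le_of_superlevel_sums w p hL F hp fun s _ => hM _ (filter_subset _ _)
  have hsplit : ∑ n ∈ F, (r n : 𝕜) • w n =
      ∑ n ∈ F, ((max (r n) 0 : ℝ) : 𝕜) • w n - ∑ n ∈ F, ((max (-r n) 0 : ℝ) : 𝕜) • w n := by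
    rw [← sum_sub_distrib]
    refine sum_congr rfl fun n _ => ?_
    rw [← sub_smul, ← RCLike.ofReal_sub, max_zero_sub_max_neg_zero_eq_self]
  rw [hsplit, two_mul, add_mul]
  refine (norm_sub_le _ _).trans (add_le_add (hpart _ fun n hn => ?_) (hpart _ fun n hn => ?_))
  · have := hr n hn
    exact ⟨le_max_right _ _, max_le ((le_abs_self _).trans this) hL⟩
  · have := hr n hn
    exact ⟨le_max_right _ _, max_le ((neg_le_abs _).trans this) hL⟩

theorem norm_sum_smul_le_of_subset_sums (w : ι → X) (c : ι → 𝕜) {L M : ℝ} (hL : 0 ≤ L)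
    (F : Finset ι) (hc : ∀ n ∈ F, ‖c n‖ ≤ L) (hM : ∀ S ⊆ F, ‖∑ n ∈ S, w n‖ ≤ M) :
    ‖∑ n ∈ F, c n • w n‖ ≤ 4 * L * M := by
  have hsplit : ∑ n ∈ F, c n • w n = ∑ n ∈ F, (RCLike.re (c n) : 𝕜) • w n +
      (RCLike.I : 𝕜) • ∑ n ∈ F, (RCLike.im (c n) : 𝕜) • w n := by
    rw [smul_sum, ← sum_add_distrib]
    refine sum_congr rfl fun n _ => ?_
    rw [smul_smul, ← add_smul, mul_comm, RCLike.re_add_im]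
  have hre := norm_sum_ofReal_smul_le_of_subset_sums (𝕜 := 𝕜) w (fun n => RCLike.re (c n)) hL F
    (fun n hn => (RCLike.abs_re_le_norm _).trans (hc n hn)) hM
  have him := norm_sum_ofReal_smul_le_of_subset_sums (𝕜 := 𝕜) w (fun n => RCLike.im (c n)) hL F
    (fun n hn => (RCLike.abs_im_le_norm _).trans (hc n hn)) hM
  have hI : ‖(RCLike.I : 𝕜)‖ ≤ 1 := by rw [RCLike.norm_I]; split_ifs <;> norm_num
  rw [hsplit]
  calc _ ≤ 2 * L * M + 1 * (2 * L * M) := (norm_add_le _ _).trans <| add_le_add hre <|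
        (norm_smul_le _ _).trans (mul_le_mul hI him (norm_nonneg _) zero_le_one)
    _ = 4 * L * M := by ring

end LayerCake

theorem tPair_of_subset_initialSegment {seq : ℕ → ℕ} (hseq : StrictMono seq) {k : ℕ}
    {S D : Finset ℕ} (hS : S ⊆ (range k).image seq) (hD : Disjoint D ((range k).image seq))
    (hcard : S.card ≤ D.card) : TPair seq S D := by
  refine ⟨fun a ha => ?_, hcard, fun a ha d hd hdseq => ?_⟩
  · obtain ⟨i, -, rfl⟩ := mem_image.mp (hS ha)
    exact ⟨i, rfl⟩
  · obtain ⟨i, hi, rfl⟩ := mem_image.mp (hS ha)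
    obtain ⟨j, rfl⟩ := hdseq
    have hj : ¬ j < k := fun hj =>
      disjoint_left.mp hD hd (mem_image.mpr ⟨j, mem_range.mpr hj, rfl⟩)
    exact hseq (by rw [mem_range] at hi; omega)

theorem exists_initialSegment_superset {seq : ℕ → ℕ} (hseq : StrictMono seq) (A : Finset ℕ)
    (hA : (↑A : Set ℕ) ⊆ Set.range seq) :
    ∃ k, A ⊆ (range k).image seq ∧ ∀ i < k, ∃ a ∈ A, seq i ≤ a := by
  classical
  rw [← Set.image_univ, subset_set_image_iff] at hA
  obtain ⟨I, -, rfl⟩ := hA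
  refine ⟨I.sup (· + 1), image_subset_image fun i hi => ?_, fun i hi => ?_⟩
  · exact mem_range.mpr (Nat.lt_of_succ_le (le_sup (f := (· + 1)) hi))
  · obtain ⟨j, hj, hij⟩ := Finset.lt_sup_iff.mp hi
    exact ⟨seq j, mem_image_of_mem seq hj, hseq.monotone (Nat.le_of_lt_succ hij)⟩

namespace BasisOf

variable {𝕜 X : Type*} [RCLike 𝕜] [NormedAddCommGroup X] [NormedSpace 𝕜 X] (B : BasisOf 𝕜 X)

theorem coord_sum_smul (n : ℕ) (S : Finset ℕ) (c : ℕ → 𝕜) :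
    B.coord n (∑ m ∈ S, c m • B.e m) = if n ∈ S then c n else 0 := by
  simp only [map_sum, map_smul, B.biorth, smul_eq_mul, mul_ite, mul_one, mul_zero,
    sum_ite_eq]

theorem coord_proj (n : ℕ) (S : Finset ℕ) (x : X) :
    B.coord n (B.proj S x) = if n ∈ S then B.coord n x else 0 :=
  B.coord_sum_smul n S _

theorem coord_sgnSum (n : ℕ) (S : Finset ℕ) (ε : ℕ → 𝕜) :
    B.coord n (B.sgnSum ε S) = if n ∈ S then ε n else 0 :=
  B.coord_sum_smul n S ε

@[simp]
theorem proj_empty (x : X) : B.proj ∅ x = 0 := sum_empty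

@[simp]
theorem sgnSum_empty (ε : ℕ → 𝕜) : B.sgnSum ε ∅ = 0 := sum_empty

theorem proj_add (S : Finset ℕ) (x y : X) : B.proj S (x + y) = B.proj S x + B.proj S y := by
  simp only [proj, map_add, add_smul, sum_add_distrib]

theorem proj_congr {S : Finset ℕ} {x y : X} (h : ∀ n ∈ S, B.coord n x = B.coord n y) :
    B.proj S x = B.proj S y :=
  sum_congr rfl fun n hn => by rw [h n hn]

theorem proj_eq_zero {S : Finset ℕ} {x : X} (h : ∀ n ∈ S, B.coord n x = 0) : B.proj S x = 0 :=
  sum_eq_zero fun n hn => by rw [h n hn, zero_smul]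

theorem proj_sgnSum (S T : Finset ℕ) (ε : ℕ → 𝕜) :
    B.proj S (B.sgnSum ε T) = B.sgnSum ε (S ∩ T) := by
  simp only [proj, coord_sgnSum, ite_smul, zero_smul]
  exact sum_ite_mem S T _

theorem sgnSum_union {S T : Finset ℕ} (h : Disjoint S T) (ε : ℕ → 𝕜) :
    B.sgnSum ε (S ∪ T) = B.sgnSum ε S + B.sgnSum ε T :=
  sum_union h

theorem sgnSum_one (S : Finset ℕ) : B.sgnSum (fun _ => 1) S = B.ones S :=
  sum_congr rfl fun _ _ => one_smul _ _

theorem projSeq_eq_proj {seq : ℕ → ℕ} (hseq : Function.Injective seq) (k : ℕ) (x : X) :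
    B.projSeq seq k x = B.proj ((range k).image seq) x := by
  rw [projSeq, proj, sum_image fun _ _ _ _ h => hseq h]

theorem projSeq_zero (seq : ℕ → ℕ) (x : X) : B.projSeq seq 0 x = 0 := sum_empty

variable {B} {seq : ℕ → ℕ} {C : ℝ}

theorem IsGreedySet.filter_lt {x : X} {F : Finset ℕ} (hF : B.IsGreedySet x F) (r : ℝ) :
    B.IsGreedySet x (F.filter fun n => r < ‖B.coord n x‖) := by
  intro a ha b hb
  rw [mem_filter] at ha
  by_cases hbF : b ∈ F
  · exact (not_lt.mp fun h => hb (mem_filter.mpr ⟨hbF, h⟩)).trans ha.2.le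
  · exact hF a ha.1 b hbF

theorem QuasiGreedyWith.mono {C' : ℝ} (h : B.QuasiGreedyWith C) (hCC' : C ≤ C') :
    B.QuasiGreedyWith C' := fun x A hA hg =>
  (h x A hA hg).trans (mul_le_mul_of_nonneg_right hCC' (norm_nonneg x))

theorem QuasiGreedyWith.norm_proj_le (h : B.QuasiGreedyWith C) (hC : 0 ≤ C) {x : X}
    {A : Finset ℕ} (hA : B.IsGreedySet x A) : ‖B.proj A x‖ ≤ C * ‖x‖ := by
  rcases A.eq_empty_or_nonempty with rfl | hne
  · simpa using mul_nonneg hC (norm_nonneg x)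
  · exact h x A hne hA

theorem QuasiGreedyWith.norm_sgnSum_le_of_subset (h : B.QuasiGreedyWith C) (hC : 0 ≤ C)
    {ε : ℕ → 𝕜} {S F : Finset ℕ} (hSF : S ⊆ F) (hε : ∀ n ∈ F, ‖ε n‖ = 1) :
    ‖B.sgnSum ε S‖ ≤ C * ‖B.sgnSum ε F‖ := by
  have hS : B.IsGreedySet (B.sgnSum ε F) S := by
    intro a ha b _
    rw [coord_sgnSum, coord_sgnSum, if_pos (hSF ha), hε a (hSF ha)]
    split_ifs with hb
    · exact (hε b hb).le
    · simp
  simpa [proj_sgnSum, inter_eq_left.mpr hSF] using h.norm_proj_le hC hS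

theorem QuasiGreedyWith.norm_ones_le (h : B.QuasiGreedyWith C) (hC : 0 ≤ C)
    {ε : ℕ → 𝕜} {F : Finset ℕ} (hε : ∀ n ∈ F, ‖ε n‖ = 1) :
    ‖B.ones F‖ ≤ 4 * C * ‖B.sgnSum ε F‖ := by
  have hones : B.ones F = ∑ n ∈ F, (ε n)⁻¹ • (ε n • B.e n) :=
    sum_congr rfl fun n hn => by
      rw [smul_smul, inv_mul_cancel₀ (norm_ne_zero_iff.mp (by simp [hε n hn])), one_smul]
  have := norm_sum_smul_le_of_subset_sums (fun n => ε n • B.e n) (fun n => (ε n)⁻¹) zero_le_one F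
    (fun n hn => by simp [hε n hn]) fun S hS => h.norm_sgnSum_le_of_subset hC hS hε
  rwa [← hones, mul_one, ← mul_assoc] at this

/-- The sum over a superlevel set of the weights `t / |e_n^*(z)|` is the difference of two
greedy sums of `z`. -/
theorem QuasiGreedyWith.mul_norm_sgnSum_le (h : B.QuasiGreedyWith C) (hC : 0 ≤ C)
    {z : X} {F : Finset ℕ} (hF : B.IsGreedySet z F) {t : ℝ} (ht : 0 < t)
    (htF : ∀ n ∈ F, t ≤ ‖B.coord n z‖) :
    t * ‖B.sgnSum (fun n => B.coord n z / ‖B.coord n z‖) F‖ ≤ 2 * C * ‖z‖ := by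
  have hsum : (t : 𝕜) • B.sgnSum (fun n => B.coord n z / ‖B.coord n z‖) F =
      ∑ n ∈ F, ((t / ‖B.coord n z‖ : ℝ) : 𝕜) • (B.coord n z • B.e n) := by
    rw [sgnSum, smul_sum]
    refine sum_congr rfl fun n _ => ?_
    rw [smul_smul, smul_smul]
    push_cast
    ring_nf
  have hlevel : ∀ s > 0, ‖∑ n ∈ F with s ≤ t / ‖B.coord n z‖, B.coord n z • B.e n‖ ≤
      2 * C * ‖z‖ := by
    intro s hs
    have hsplit := sum_filter_not_add_sum_filter F (fun n => t / s < ‖B.coord n z‖)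
      fun n => B.coord n z • B.e n
    have hfilter : F.filter (fun n => s ≤ t / ‖B.coord n z‖) =
        F.filter (fun n => ¬ t / s < ‖B.coord n z‖) := by
      refine filter_congr fun n hn => ?_
      have hpos : 0 < ‖B.coord n z‖ := ht.trans_le (htF n hn)
      rw [not_lt, le_div_iff₀ hpos, le_div_iff₀ hs, mul_comm]
    rw [hfilter, eq_sub_of_add_eq hsplit]
    calc _ ≤ C * ‖z‖ + C * ‖z‖ :=
          (norm_sub_le _ _).trans (add_le_add (h.norm_proj_le hC hF)
            (h.norm_proj_le hC (hF.filter_lt _)))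
      _ = 2 * C * ‖z‖ := by ring
  have := norm_sum_smul_le_of_superlevel_sums (𝕜 := 𝕜) _ _ zero_le_one F
    (fun n hn => ⟨by positivity, (div_le_one (ht.trans_le (htF n hn))).mpr (htF n hn)⟩) hlevel
  rwa [← hsum, norm_smul, RCLike.norm_ofReal, abs_of_pos ht, one_mul] at this

theorem QuasiGreedyWith.mul_norm_ones_le (h : B.QuasiGreedyWith C) (hC : 0 ≤ C)
    {z : X} {F : Finset ℕ} (hF : B.IsGreedySet z F) {t : ℝ} (ht : 0 ≤ t)
    (htF : ∀ n ∈ F, t ≤ ‖B.coord n z‖) : t * ‖B.ones F‖ ≤ 8 * C ^ 2 * ‖z‖ := by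
  rcases ht.eq_or_lt with rfl | ht
  · simp only [zero_mul]; positivity
  have hε : ∀ n ∈ F, ‖B.coord n z / (‖B.coord n z‖ : 𝕜)‖ = 1 := fun n hn => by
    have : ‖B.coord n z‖ ≠ 0 := (ht.trans_le (htF n hn)).ne'
    simp [norm_div, this]
  calc t * ‖B.ones F‖ ≤ t * (4 * C * ‖B.sgnSum _ F‖) := by gcongr; exact h.norm_ones_le hC hε
    _ = 4 * C * (t * ‖B.sgnSum _ F‖) := by ring
    _ ≤ 4 * C * (2 * C * ‖z‖) := by gcongr 4 * C * ?_; exact h.mul_norm_sgnSum_le hC hF ht htF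
    _ = 8 * C ^ 2 * ‖z‖ := by ring

theorem QuasiGreedyWith.spgWith {C₁ C₂ : ℝ} (hseq : StrictMono seq) (hq : B.QuasiGreedyWith C₁)
    (hC₁ : 0 ≤ C₁) (hc : B.ConservativeWith seq C₂) (hC₂ : 0 ≤ C₂) :
    B.SPGWith seq (1 + C₁ + 32 * C₁ ^ 2 * C₂) := by
  classical
  intro x m hm A hA hgr k hk
  rw [projSeq_eq_proj B hseq.injective]
  set P := (range k).image seq
  set z := x - B.proj P x
  have hPcard : P.card = k := by rw [card_image_of_injective _ hseq.injective, card_range]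
  have hcoord : ∀ n, B.coord n z = if n ∈ P then 0 else B.coord n x := fun n => by
    simp only [z, map_sub, coord_proj]; split_ifs <;> simp
  have hdecomp : x - B.proj A x = z + (B.proj (P \ A) x - B.proj (A \ P) x) := by
    simp only [z, proj, sum_sdiff_sub_sum_sdiff]; abel
  have hAne : A.Nonempty := card_pos.mp (by omega)
  set t := A.inf' hAne fun n => ‖B.coord n x‖
  have hzF : ∀ n ∈ A \ P, B.coord n z = B.coord n x := fun n hn => by
    rw [hcoord, if_neg (mem_sdiff.mp hn).2]
  have hgrF : B.IsGreedySet z (A \ P) := by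
    intro a ha b hb
    rw [hzF a ha, hcoord]
    split_ifs with hbP
    · simp
    · exact hgr a (mem_sdiff.mp ha).1 b fun hbA => hb (mem_sdiff.mpr ⟨hbA, hbP⟩)
  have hF : ‖B.proj (A \ P) x‖ ≤ C₁ * ‖z‖ := by
    rw [proj_congr B fun n hn => (hzF n hn).symm]
    exact hq.norm_proj_le hC₁ hgrF
  have ht : 0 ≤ t := (le_inf'_iff _ _).mpr fun _ _ => norm_nonneg _
  have hones : t * ‖B.ones (A \ P)‖ ≤ 8 * C₁ ^ 2 * ‖z‖ :=
    hq.mul_norm_ones_le hC₁ hgrF ht fun n hn => (hzF n hn).symm ▸ inf'_le _ (mem_sdiff.mp hn).1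
  have hE : ‖B.proj (P \ A) x‖ ≤ 4 * t * (C₂ * ‖B.ones (A \ P)‖) := by
    refine norm_sum_smul_le_of_subset_sums B.e _ ht _
      (fun n hn => le_inf' _ _ fun a ha => hgr a ha n (mem_sdiff.mp hn).2) fun S hS => ?_
    refine hc S _ (tPair_of_subset_initialSegment hseq (hS.trans sdiff_subset) sdiff_disjoint ?_)
    calc S.card ≤ (P \ A).card := card_le_card hS
      _ ≤ (A \ P).card := card_sdiff_le_card_sdiff_iff.mpr (by omega)
  rw [hdecomp]
  calc _ ≤ ‖z‖ + (‖B.proj (P \ A) x‖ + ‖B.proj (A \ P) x‖) :=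
        (norm_add_le _ _).trans (add_le_add_right (norm_sub_le _ _) _)
    _ ≤ ‖z‖ + (4 * C₂ * (t * ‖B.ones (A \ P)‖) + C₁ * ‖z‖) := by
        gcongr; exact hE.trans_eq (by ring)
    _ ≤ ‖z‖ + (4 * C₂ * (8 * C₁ ^ 2 * ‖z‖) + C₁ * ‖z‖) := by gcongr
    _ = (1 + C₁ + 32 * C₁ ^ 2 * C₂) * ‖z‖ := by ring

theorem SPGWith.norm_sub_proj_le (h : B.SPGWith seq C) (hC : 1 ≤ C) {x : X} {A : Finset ℕ}
    (hA : B.IsGreedySet x A) {k : ℕ} (hk : k ≤ A.card) :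
    ‖x - B.proj A x‖ ≤ C * ‖x - B.projSeq seq k x‖ := by
  rcases A.eq_empty_or_nonempty with rfl | hne
  · obtain rfl : k = 0 := by simpa using hk
    simpa [projSeq_zero] using le_mul_of_one_le_left (norm_nonneg x) hC
  · exact h x A.card (card_pos.mpr hne) A rfl hA k hk

theorem SPGWith.quasiGreedyWith (h : B.SPGWith seq C) (hC : 1 ≤ C) :
    B.QuasiGreedyWith (1 + C) := by
  intro x A _ hA
  have := h.norm_sub_proj_le hC hA (Nat.zero_le _)
  rw [projSeq_zero, sub_zero] at this
  calc ‖B.proj A x‖ = ‖x - (x - B.proj A x)‖ := by rw [sub_sub_cancel]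
    _ ≤ ‖x‖ + C * ‖x‖ := (norm_sub_le _ _).trans (add_le_add_right this _)
    _ = (1 + C) * ‖x‖ := by ring

/-- Let `P ⊇ A` be an initial segment of `𝐧` not beyond `max A`, so that `P` avoids `D ∪ supp x`,
and let `η` be the sign equal to `δ` on `D` and to `1` elsewhere. Then
`y = x + 1_{εA} + 1_{η((P \ A) ∪ D)}` has the greedy set `(P \ A) ∪ D` of order at least `|P|`,
and the strong partially greedy inequality for `y` is the PSLC inequality. -/
theorem SPGWith.pslcWith (hseq : StrictMono seq) (h : B.SPGWith seq C) (hC : 1 ≤ C) :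
    B.PSLCWith seq C := by
  classical
  rintro x hx A D ⟨hAseq, hcard, -⟩ hDx hAx ε δ hε hδ
  obtain ⟨k, hAP, hPA⟩ := exists_initialSegment_superset hseq A hAseq
  set P := (range k).image seq
  have hP : ∀ n ∈ P, n ∉ D ∧ B.coord n x = 0 := by
    intro n hn
    obtain ⟨i, hi, rfl⟩ := mem_image.mp hn
    obtain ⟨a, ha, hia⟩ := hPA i (mem_range.mp hi)
    exact ⟨fun hD => (hAx a ha _ (.inl hD) ⟨i, rfl⟩).not_ge hia,
      not_not.mp fun hx' => (hAx a ha _ (.inr hx') ⟨i, rfl⟩).not_ge hia⟩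
  set G := P \ A ∪ D
  set η : ℕ → 𝕜 := fun n => if n ∈ D then δ n else 1
  have hη : ∀ n, ‖η n‖ = 1 := fun n => by simp only [η]; split_ifs <;> simp [hδ]
  set y := x + B.sgnSum ε A + B.sgnSum η G
  have hGx : ∀ n ∈ G, B.coord n x = 0 := fun n hn => (mem_union.mp hn).elim
    (fun hn => (hP n (mem_sdiff.mp hn).1).2) (hDx n)
  have hGA : G ∩ A = ∅ := by
    refine disjoint_iff_inter_eq_empty.mp (disjoint_union_left.mpr ⟨sdiff_disjoint, ?_⟩)
    exact disjoint_left.mpr fun n hD hA => (hP n (hAP hA)).1 hD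
  have hPD : Disjoint (P \ A) D := disjoint_left.mpr fun n hn => (hP n (mem_sdiff.mp hn).1).1
  have hgreedy : B.IsGreedySet y G := by
    intro a ha b hb
    have hya : B.coord a y = η a := by
      have haA : a ∉ A := (disjoint_iff_inter_eq_empty.mpr hGA).notMem_of_mem_left_finset ha
      simp [y, coord_sgnSum, ha, haA, hGx a ha]
    rw [hya, hη]
    simp only [y, map_add, coord_sgnSum, if_neg hb, add_zero]
    split_ifs with hbA
    · simp [(hP b (hAP hbA)).2, hε]
    · simpa using hx b
  have hkG : k ≤ G.card := by
    have : P.card = k := by rw [card_image_of_injective _ hseq.injective, card_range]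
    rw [card_union_of_disjoint hPD, card_sdiff_of_subset hAP]
    omega
  have hyG : y - B.proj G y = x + B.sgnSum ε A := by
    simp [y, proj_add, proj_sgnSum, proj_eq_zero B hGx, hGA]
  have hyP : y - B.projSeq seq k y = x + B.sgnSum δ D := by
    have hPG : P ∩ G = P \ A := by
      ext n; simp +contextual [G, mem_sdiff, fun n hn => (hP n hn).1]
    have hηD : B.sgnSum η D = B.sgnSum δ D := sum_congr rfl fun n hn => by simp [η, hn]
    rw [projSeq_eq_proj B hseq.injective]
    change y - B.proj P y = _
    simp only [y, proj_add, proj_sgnSum, proj_eq_zero B fun n hn => (hP n hn).2,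
      inter_eq_right.mpr hAP, hPG]
    rw [sgnSum_union B hPD, hηD]
    abel
  simpa [hyG, hyP] using h.norm_sub_proj_le hC hgreedy hkG

theorem PSLCWith.superconservativeWith (h : B.PSLCWith seq C) :
    B.SuperconservativeWith seq C := by
  intro A D hAD ε δ hε hδ
  simpa using h 0 (by simp) A D hAD (by simp)
    (fun a ha j hj hjseq => hAD.2.2 a ha j (by simpa using hj) hjseq) ε δ hε hδ

theorem SuperconservativeWith.conservativeWith (h : B.SuperconservativeWith seq C) :
    B.ConservativeWith seq C := by
  intro A D hAD
  simpa [sgnSum_one] using h A D hAD (fun _ => 1) (fun _ => 1) (by simp) (by simp)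

theorem SPG.quasiGreedy (h : B.SPG seq) : B.QuasiGreedy :=
  let ⟨_, hC, hspg⟩ := h
  ⟨_, hspg.quasiGreedyWith hC⟩

theorem SPG.pslc (hseq : StrictMono seq) (h : B.SPG seq) : B.PSLC seq :=
  let ⟨C, hC, hspg⟩ := h
  ⟨C, hC, hspg.pslcWith hseq hC⟩

theorem PSLC.superconservative (h : B.PSLC seq) : B.Superconservative seq :=
  let ⟨C, hC, hpslc⟩ := h
  ⟨C, zero_lt_one.trans_le hC, hpslc.superconservativeWith⟩

theorem Superconservative.conservative (h : B.Superconservative seq) : B.Conservative seq :=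
  let ⟨C, hC, hsc⟩ := h
  ⟨C, hC, hsc.conservativeWith⟩

theorem QuasiGreedy.spg (hseq : StrictMono seq) (hq : B.QuasiGreedy) (hc : B.Conservative seq) :
    B.SPG seq := by
  obtain ⟨C₁, hq⟩ := hq
  obtain ⟨C₂, hC₂, hc⟩ := hc
  have hC₁ : 0 ≤ max C₁ 0 := le_max_right _ _
  refine ⟨_, ?_, (hq.mono (le_max_left C₁ 0)).spgWith hseq hC₁ hc hC₂.le⟩
  nlinarith [mul_nonneg (sq_nonneg (max C₁ 0)) hC₂.le]

end BasisOf

theorem statement0_general {𝕜 X : Type*} [RCLike 𝕜] [NormedAddCommGroup X] [NormedSpace 𝕜 X]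
    (B : BasisOf 𝕜 X) (seq : ℕ → ℕ) (hseq : StrictMono seq) :
    (B.SPG seq ↔ B.QuasiGreedy ∧ B.PSLC seq) ∧
    (B.SPG seq ↔ B.QuasiGreedy ∧ B.Superconservative seq) ∧
    (B.SPG seq ↔ B.QuasiGreedy ∧ B.Conservative seq) := by
  refine ⟨⟨fun h => ⟨h.quasiGreedy, h.pslc hseq⟩, fun ⟨hq, hp⟩ => ?_⟩,
    ⟨fun h => ⟨h.quasiGreedy, (h.pslc hseq).superconservative⟩, fun ⟨hq, hs⟩ => ?_⟩,
    ⟨fun h => ⟨h.quasiGreedy, (h.pslc hseq).superconservative.conservative⟩,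
      fun ⟨hq, hc⟩ => hq.spg hseq hc⟩⟩
  · exact hq.spg hseq hp.superconservative.conservative
  · exact hq.spg hseq hs.conservative

/-- For a basis of a Banach space, being (𝐧, strong partially greedy) is
equivalent to being quasi-greedy together with any one of: (𝐧, PSLC),
(𝐧, superconservative), (𝐧, conservative). -/
theorem statement0 {𝕜 X : Type*} [RCLike 𝕜] [NormedAddCommGroup X] [NormedSpace 𝕜 X]
    [CompleteSpace X] (B : BasisOf 𝕜 X) (seq : ℕ → ℕ) (hseq : StrictMono seq) :
    (B.SPG seq ↔ B.QuasiGreedy ∧ B.PSLC seq) ∧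
    (B.SPG seq ↔ B.QuasiGreedy ∧ B.Superconservative seq) ∧
    (B.SPG seq ↔ B.QuasiGreedy ∧ B.Conservative seq) :=
  statement0_general B seq hseq
end

section
/- If a basis 𝓑 of a Banach space X is C-(𝐧, strong partially greedy), then: (i) 𝓑 is suppression quasi-greedy with suppression quasi-greedy constant C_ℓ ≤ C; (ii) 𝓑 is (𝐧, PSLC) with constant Δ_{𝐧,pl} ≤ C. -/
open scoped BigOperators ENNReal NNReal

section AuxStatement1

variable {𝕜 X : Type*} [RCLike 𝕜] [NormedAddCommGroup X] [NormedSpace 𝕜 X]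

lemma aux_coord_sgnSum (B : BasisOf 𝕜 X) (ε : ℕ → 𝕜) (A : Finset ℕ) (n : ℕ) :
    B.coord n (B.sgnSum ε A) = if n ∈ A then ε n else 0 := by
  unfold BasisOf.sgnSum
  rw [map_sum]
  simp only [map_smul, B.biorth, smul_eq_mul, mul_ite, mul_one, mul_zero]
  exact Finset.sum_ite_eq A n ε

lemma aux_coord_ones (B : BasisOf 𝕜 X) (A : Finset ℕ) (n : ℕ) :
    B.coord n (B.ones A) = if n ∈ A then (1 : 𝕜) else 0 := by
  unfold BasisOf.ones
  rw [map_sum]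
  simp only [B.biorth]
  exact Finset.sum_ite_eq A n (fun _ => (1 : 𝕜))

end AuxStatement1

/-- A `C`-(𝐧, strong partially greedy) basis is suppression quasi-greedy
with constant at most `C` and (𝐧, PSLC) with constant at most `C`. -/
theorem statement1 {𝕜 X : Type*} [RCLike 𝕜] [NormedAddCommGroup X] [NormedSpace 𝕜 X]
    [CompleteSpace X] (B : BasisOf 𝕜 X) (seq : ℕ → ℕ) (hseq : StrictMono seq)
    (C : ℝ) (hC : 1 ≤ C) (h : B.SPGWith seq C) :
    B.SuppQGWith C ∧ B.PSLCWith seq C := by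
  constructor
  · -- suppression quasi-greedy
    intro x A hAne hg
    have h1 : 1 ≤ A.card := hAne.card_pos
    have := h x A.card h1 A rfl hg 0 (Nat.zero_le _)
    simpa [BasisOf.projSeq] using this
  · -- PSLC
    intro x hx A D hT hD0 hA ε δ hε hδ
    obtain ⟨hAseq, hcard, -⟩ := hT
    by_cases hAne : A.Nonempty
    · -- main case: A nonempty
      have hDne : D.Nonempty := Finset.card_pos.mp (lt_of_lt_of_le hAne.card_pos hcard)
      set a₀ := A.max' hAne with ha₀
      have ha₀A : a₀ ∈ A := A.max'_mem hAne
      obtain ⟨k₀, hk₀⟩ := hAseq (Finset.mem_coe.mpr ha₀A)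
      set k := k₀ + 1 with hk
      set F : Finset ℕ := (Finset.range k).image seq with hF
      have hAF : A ⊆ F := by
        intro a haA
        obtain ⟨j, hj⟩ := hAseq (Finset.mem_coe.mpr haA)
        have hle : seq j ≤ seq k₀ := by rw [hj, hk₀]; exact A.le_max' a haA
        have : j ≤ k₀ := (hseq.le_iff_le).mp hle
        exact Finset.mem_image.mpr ⟨j, Finset.mem_range.mpr (Nat.lt_succ_of_le this), hj⟩
      set E : Finset ℕ := F \ A with hE
      have hEprop : ∀ n ∈ E, n ∉ A ∧ n ∉ D ∧ B.coord n x = 0 := by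
        intro n hn
        obtain ⟨hnF, hnA⟩ := Finset.mem_sdiff.mp hn
        obtain ⟨i, hi, hin⟩ := Finset.mem_image.mp hnF
        have hik : i ≤ k₀ := Nat.lt_succ_iff.mp (Finset.mem_range.mp hi)
        have hna : n ≤ a₀ := by
          rw [← hin, ← hk₀]; exact hseq.monotone hik
        refine ⟨hnA, ?_, ?_⟩
        · intro hnD
          exact absurd (hA a₀ ha₀A n (Or.inl hnD) ⟨i, hin⟩) (not_lt.mpr hna)
        · by_contra h0
          exact absurd (hA a₀ ha₀A n (Or.inr h0) ⟨i, hin⟩) (not_lt.mpr hna)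
      have hAD : ∀ a ∈ A, a ∉ D := by
        intro a ha haD
        exact absurd (hA a ha a (Or.inl haD) (hAseq (Finset.mem_coe.mpr ha))) (lt_irrefl a)
      have hAx : ∀ a ∈ A, B.coord a x = 0 := by
        intro a ha
        by_contra h0
        exact absurd (hA a ha a (Or.inr h0) (hAseq (Finset.mem_coe.mpr ha))) (lt_irrefl a)
      have hEDdisj : Disjoint E D := by
        rw [Finset.disjoint_left]
        intro n hn hnD
        exact (hEprop n hn).2.1 hnD
      set G : Finset ℕ := E ∪ D with hG
      set y : X := x + B.sgnSum ε A + B.ones E + B.sgnSum δ D with hy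
      have hcoordy : ∀ n, B.coord n y = B.coord n x + (if n ∈ A then ε n else 0)
          + (if n ∈ E then (1 : 𝕜) else 0) + (if n ∈ D then δ n else 0) := by
        intro n
        simp [hy, map_add, aux_coord_sgnSum, aux_coord_ones]
      have hnormy_in : ∀ n ∈ G, ‖B.coord n y‖ = 1 := by
        intro n hn
        rcases Finset.mem_union.mp hn with hnE | hnD
        · obtain ⟨hnA, hnD, hnx⟩ := hEprop n hnE
          rw [hcoordy n, hnx, if_neg hnA, if_pos hnE, if_neg hnD]
          simp
        · have hnE : n ∉ E := Finset.disjoint_right.mp hEDdisj hnD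
          have hnA : n ∉ A := fun hnA => hAD n hnA hnD
          rw [hcoordy n, hD0 n hnD, if_neg hnA, if_neg hnE, if_pos hnD]
          simpa using hδ n
      have hnormy_out : ∀ n, n ∉ G → ‖B.coord n y‖ ≤ 1 := by
        intro n hn
        rw [hG, Finset.mem_union] at hn
        push_neg at hn
        obtain ⟨hnE, hnD⟩ := hn
        by_cases hnA : n ∈ A
        · rw [hcoordy n, hAx n hnA, if_pos hnA, if_neg hnE, if_neg hnD]
          simp [hε n]
        · rw [hcoordy n, if_neg hnA, if_neg hnE, if_neg hnD]
          simpa using hx n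
      have hgr : B.IsGreedySet y G := by
        intro a ha b hb
        rw [hnormy_in a ha]
        exact hnormy_out b hb
      have hFcard : F.card = k := by
        rw [hF, Finset.card_image_of_injective _ hseq.injective, Finset.card_range]
      have hkcard : E.card + A.card = k := by
        rw [← hFcard, hE]
        exact Finset.card_sdiff_add_card_eq_card hAF
      have hGcard : G.card = E.card + D.card := Finset.card_union_of_disjoint hEDdisj
      have hkm : k ≤ G.card := by
        rw [hGcard, ← hkcard]
        exact Nat.add_le_add_left hcard _
      have hm1 : 1 ≤ G.card := by
        rw [hGcard]
        have := hDne.card_pos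
        omega
      have hprojG : B.proj G y = B.ones E + B.sgnSum δ D := by
        unfold BasisOf.proj
        rw [hG, Finset.sum_union hEDdisj]
        congr 1
        · unfold BasisOf.ones
          apply Finset.sum_congr rfl
          intro n hn
          obtain ⟨hnA, hnD, hnx⟩ := hEprop n hn
          rw [hcoordy n, hnx, if_neg hnA, if_pos hn, if_neg hnD]
          simp
        · unfold BasisOf.sgnSum
          apply Finset.sum_congr rfl
          intro n hn
          have hnE : n ∉ E := Finset.disjoint_right.mp hEDdisj hn
          have hnA : n ∉ A := fun hnA => hAD n hnA hn
          rw [hcoordy n, hD0 n hn, if_neg hnA, if_neg hnE, if_pos hn]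
          simp
      have hprojSeq : B.projSeq seq k y = B.ones E + B.sgnSum ε A := by
        unfold BasisOf.projSeq
        have himg : ∑ i ∈ Finset.range k, B.coord (seq i) y • B.e (seq i)
            = ∑ n ∈ F, B.coord n y • B.e n := by
          rw [hF, Finset.sum_image]
          intro i _ j _ hij
          exact hseq.injective hij
        rw [himg, ← Finset.sum_sdiff hAF, ← hE]
        congr 1
        · unfold BasisOf.ones
          apply Finset.sum_congr rfl
          intro n hn
          obtain ⟨hnA, hnD, hnx⟩ := hEprop n hn
          rw [hcoordy n, hnx, if_neg hnA, if_pos hn, if_neg hnD]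
          simp
        · unfold BasisOf.sgnSum
          apply Finset.sum_congr rfl
          intro n hn
          have hnE : n ∉ E := by
            rw [hE]
            simp [hn]
          have hnD : n ∉ D := hAD n hn
          rw [hcoordy n, hAx n hn, if_pos hn, if_neg hnE, if_neg hnD]
          simp
      have key := h y G.card hm1 G rfl hgr k hkm
      rw [hprojG, hprojSeq] at key
      have e₁ : y - (B.ones E + B.sgnSum δ D) = x + B.sgnSum ε A := by
        rw [hy]; abel
      have e₂ : y - (B.ones E + B.sgnSum ε A) = x + B.sgnSum δ D := by
        rw [hy]; abel
      rw [e₁, e₂] at key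
      exact key
    · -- A = ∅
      have hAempty : A = ∅ := Finset.not_nonempty_iff_eq_empty.mp hAne
      subst hAempty
      by_cases hDne : D.Nonempty
      · set y : X := x + B.sgnSum δ D with hy
        have hcoordy : ∀ n, B.coord n y = B.coord n x + (if n ∈ D then δ n else 0) := by
          intro n
          simp [hy, map_add, aux_coord_sgnSum]
        have hgr : B.IsGreedySet y D := by
          intro a ha b hb
          rw [hcoordy a, hcoordy b, hD0 a ha, if_pos ha, if_neg hb, zero_add, add_zero]
          calc ‖B.coord b x‖ ≤ 1 := hx b
            _ = ‖δ a‖ := (hδ a).symm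
        have key := h y D.card hDne.card_pos D rfl hgr 0 (Nat.zero_le _)
        have hproj : B.proj D y = B.sgnSum δ D := by
          unfold BasisOf.proj BasisOf.sgnSum
          apply Finset.sum_congr rfl
          intro n hn
          rw [hcoordy n, hD0 n hn, if_pos hn, zero_add]
        rw [hproj] at key
        simp only [BasisOf.projSeq, Finset.range_zero, Finset.sum_empty, sub_zero] at key
        have hxy : y - B.sgnSum δ D = x := by rw [hy]; abel
        rw [hxy] at key
        simpa [BasisOf.sgnSum, hy] using key
      · have hDempty : D = ∅ := Finset.not_nonempty_iff_eq_empty.mp hDne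
        subst hDempty
        simp only [BasisOf.sgnSum, Finset.sum_empty, add_zero]
        nlinarith [norm_nonneg x]
end

section
/- If a basis 𝓑 of a Banach space X is C_q-quasi-greedy and Δ_{𝐧,sc}-(𝐧, superconservative), then 𝓑 is (𝐧, PSLC) with constant Δ_{𝐧,pl} ≤ 1 + C_q + Δ_{𝐧,sc}·C_q. -/
open scoped BigOperators ENNReal NNReal

/-- A `C_q`-quasi-greedy, `Δ_sc`-(𝐧, superconservative) basis is
(𝐧, PSLC) with constant `1 + C_q + Δ_sc·C_q`. -/
theorem statement3 {𝕜 X : Type*} [RCLike 𝕜] [NormedAddCommGroup X] [NormedSpace 𝕜 X]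
    [CompleteSpace X] (B : BasisOf 𝕜 X) (seq : ℕ → ℕ) (hseq : StrictMono seq)
    (Cq Δsc : ℝ) (h1 : B.QuasiGreedyWith Cq) (h2 : B.SuperconservativeWith seq Δsc) :
    B.PSLCWith seq (1 + Cq + Δsc * Cq) := by
  intro x hx A D hT hD hx2 ε δ hε hδ
  obtain ⟨hAr, hcard, hlt⟩ := hT
  have he0 : (0:ℝ) < ‖B.e 0‖ := by
    obtain ⟨c₁, c₂, hc₁, hlow, hup⟩ := B.norm_bounds
    exact lt_of_lt_of_le hc₁ (hlow 0).1
  have hCq : 1 ≤ Cq := by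
    have hg : B.IsGreedySet (B.e 0) {0} := by
      intro a ha b hb
      simp only [Finset.mem_singleton] at ha hb
      simp [B.biorth, ha, hb]
    have h := h1 (B.e 0) {0} ⟨0, Finset.mem_singleton_self 0⟩ hg
    have hp : B.proj {0} (B.e 0) = B.e 0 := by
      simp [BasisOf.proj, B.biorth]
    rw [hp] at h
    nlinarith
  have hΔ : 0 ≤ Δsc := by
    have hT0 : TPair seq ∅ {0} := ⟨by simp, by simp, by simp⟩
    have h := h2 ∅ {0} hT0 (fun _ => 1) (fun _ => 1) (by simp) (by simp)
    simp only [BasisOf.sgnSum, Finset.sum_empty, norm_zero, Finset.sum_singleton,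
      one_smul] at h
    nlinarith
  rcases D.eq_empty_or_nonempty with rfl | hDne
  · have hA : A = ∅ := Finset.card_eq_zero.mp
      (le_antisymm (by simpa using hcard) (Nat.zero_le _))
    subst hA
    simp only [BasisOf.sgnSum, Finset.sum_empty, add_zero]
    nlinarith [norm_nonneg x, mul_nonneg (mul_nonneg hΔ (by linarith : (0:ℝ) ≤ Cq)) (norm_nonneg x), mul_nonneg (by linarith : (0:ℝ) ≤ Cq - 1) (norm_nonneg x)]
  · set y := x + B.sgnSum δ D with hy
    have hcoordS : ∀ n, B.coord n (B.sgnSum δ D) = if n ∈ D then δ n else 0 := by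
      intro n
      simp only [BasisOf.sgnSum, map_sum, map_smul, smul_eq_mul, B.biorth]
      rw [Finset.sum_congr rfl (fun k _ => by rw [mul_ite, mul_one, mul_zero]),
        Finset.sum_ite_eq D n δ]
    have hcy : ∀ n, B.coord n y = if n ∈ D then δ n else B.coord n x := by
      intro n
      rw [hy, map_add, hcoordS]
      split_ifs with h
      · rw [hD n h, zero_add]
      · rw [add_zero]
    have hgreedy : B.IsGreedySet y D := by
      intro a ha b hb
      rw [hcy a, hcy b, if_pos ha, if_neg hb, hδ a]
      exact hx b
    have hproj : B.proj D y = B.sgnSum δ D := by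
      unfold BasisOf.proj BasisOf.sgnSum
      exact Finset.sum_congr rfl fun d hd => by rw [hcy d, if_pos hd]
    have hq := h1 y D hDne hgreedy
    rw [hproj] at hq
    have hsc := h2 A D ⟨hAr, hcard, hlt⟩ ε δ hε hδ
    have hx_norm : ‖x‖ ≤ (1 + Cq) * ‖y‖ := by
      have hxy : x = y - B.sgnSum δ D := by rw [hy]; abel
      rw [hxy]
      calc ‖y - B.sgnSum δ D‖ ≤ ‖y‖ + ‖B.sgnSum δ D‖ := norm_sub_le _ _
        _ ≤ ‖y‖ + Cq * ‖y‖ := by linarith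
        _ = (1 + Cq) * ‖y‖ := by ring
    calc ‖x + B.sgnSum ε A‖ ≤ ‖x‖ + ‖B.sgnSum ε A‖ := norm_add_le _ _
      _ ≤ (1 + Cq) * ‖y‖ + Δsc * ‖B.sgnSum δ D‖ := by linarith
      _ ≤ (1 + Cq) * ‖y‖ + Δsc * (Cq * ‖y‖) := by nlinarith
      _ = (1 + Cq + Δsc * Cq) * ‖y‖ := by ring
end
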